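/- Let ν ∈ (0,1), Λ > 0, n ∈ ℤ, and μ, λ ∈ ℝ. Let Y : (0,π) × ℝ → ℂ be smooth and satisfy the charged (monopole) Laplacian eigenvalue equation (4/sin θ)∂_θ(sin θ ∂_θ Y) + (4/sin²θ)∂_φ² Y − n² cot²θ · Y − (4in cos θ/sin²θ)∂_φ Y = −μ Y, and let u : (−1,1) → ℂ be twice differentiable. Define Φ(x, ψ, θ, φ) = u(x) Y(θ,φ) e^{inψ} on (−1,1) × ℝ × (0,π) × ℝ, and let ΔΦ = (1/(S B(x)))∂_x(A(x) B(x) ∂_x Φ) + [1/(4α²S A(x)) + cot²θ/(4S B(x))]∂_ψ² Φ + (1/(S B(x) sin θ))∂_θ(sin θ ∂_θ Φ) + (1/(S B(x) sin²θ))∂_φ² Φ − (cos θ/(S B(x) sin²θ))∂_ψ ∂_φ Φ. Then ΔΦ + λΦ = [ (1/(S B(x)))·(A(x) B(x) u′(x))′ + (λ − n²/(4α²S A(x)) − μ/(4S B(x)))·u(x) ] · Y(θ,φ) e^{inψ}. In particular, Φ satisfies −ΔΦ = λΦ if and only if u satisfies the one-dimensional Sturm–Liouville equation −(1/(S B(x)))(A(x)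 B(x) u′(x))′ + [n²/(4α²S A(x)) + μ/(4S B(x))]u(x) = λ u(x) at every point where Y ≠ 0. -/

import Mathlib

open Set Real

/-- Page metric function `A(x) = (3 − ν² − ν²(1+ν²)x²)(1−x²)/(1−ν²x²)`. -/
noncomputable def pageA (ν x : ℝ) : ℝ :=
  (3 - ν ^ 2 - ν ^ 2 * (1 + ν ^ 2) * x ^ 2) * (1 - x ^ 2) / (1 - ν ^ 2 * x ^ 2)

/-- Page metric function `B(x) = (1−ν²x²)/(3+6ν²−ν⁴)`. -/
noncomputable def pageB (ν x : ℝ) : ℝ :=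
  (1 - ν ^ 2 * x ^ 2) / (3 + 6 * ν ^ 2 - ν ^ 4)

/-- Page metric constant `S = 3(1+ν²)/Λ`. -/
noncomputable def pageS (ν Λ : ℝ) : ℝ := 3 * (1 + ν ^ 2) / Λ

/-- Page metric constant `α = 1/(2(3+ν²))`. -/
noncomputable def pageAlpha (ν : ℝ) : ℝ := 1 / (2 * (3 + ν ^ 2))

/-- The separated ansatz `Φ(x,ψ,θ,φ) = u(x)Y(θ,φ)e^{inψ}`. -/
noncomputable def pagePhi (u : ℝ → ℂ) (Y : ℝ → ℝ → ℂ) (n : ℤ) (x ψ θ φ : ℝ) : ℂ :=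
  u x * Y θ φ * Complex.exp (Complex.I * (n : ℂ) * (ψ : ℂ))

/-- The Laplace–Beltrami operator of the Page metric in the coordinates `(x, ψ, θ, φ)`,
applied to a function `F`. -/
noncomputable def pageLaplacian (ν Λ : ℝ) (F : ℝ → ℝ → ℝ → ℝ → ℂ) (x ψ θ φ : ℝ) : ℂ :=
  ((1 / (pageS ν Λ * pageB ν x) : ℝ) : ℂ) *
      deriv (fun t => ((pageA ν t * pageB ν t : ℝ) : ℂ) * deriv (fun r => F r ψ θ φ) t) x +
    ((1 / (4 * pageAlpha ν ^ 2 * pageS ν Λ * pageA ν x) +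
        (Real.cos θ / Real.sin θ) ^ 2 / (4 * pageS ν Λ * pageB ν x) : ℝ) : ℂ) *
      deriv (fun t => deriv (fun r => F x r θ φ) t) ψ +
    ((1 / (pageS ν Λ * pageB ν x * Real.sin θ) : ℝ) : ℂ) *
      deriv (fun t => ((Real.sin t : ℝ) : ℂ) * deriv (fun r => F x ψ r φ) t) θ +
    ((1 / (pageS ν Λ * pageB ν x * (Real.sin θ) ^ 2) : ℝ) : ℂ) *
      deriv (fun t => deriv (fun r => F x ψ θ r) t) φ -
    ((Real.cos θ / (pageS ν Λ * pageB ν x * (Real.sin θ) ^ 2) : ℝ) : ℂ) *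
      deriv (fun t => deriv (fun r => F x t θ r) φ) ψ


private lemma expHasDeriv (n : ℤ) (ψ : ℝ) :
    HasDerivAt (fun r : ℝ => Complex.exp (Complex.I * (n : ℂ) * (r : ℂ)))
      (Complex.I * (n : ℂ) * Complex.exp (Complex.I * (n : ℂ) * (ψ : ℂ))) ψ := by
  have h1 : HasDerivAt (fun r : ℝ => ((r : ℂ))) 1 ψ := by
    simpa using (hasDerivAt_id ψ).ofReal_comp
  have h2 := (h1.const_mul (Complex.I * (n : ℂ))).cexp
  simpa [mul_comm] using h2

private lemma expDeriv (n : ℤ) :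
    deriv (fun r : ℝ => Complex.exp (Complex.I * (n : ℂ) * (r : ℂ)))
      = fun ψ : ℝ => Complex.I * (n : ℂ) * Complex.exp (Complex.I * (n : ℂ) * (ψ : ℂ)) := by
  funext ψ; exact (expHasDeriv n ψ).deriv

/-- **Separation of variables for the scalar Laplacian on the Page metric.**
If `Y` is a smooth monopole harmonic on `S²` with eigenvalue `μ` and charge `n`, and `u` is
twice differentiable on `(−1,1)`, then for `Φ = u(x)Y(θ,φ)e^{inψ}`,
`ΔΦ + λΦ = [(1/(SB))(ABu′)′ + (λ − n²/(4α²SA) − μ/(4SB))u]·Y e^{inψ}`; in particular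
`−ΔΦ = λΦ` iff `u` satisfies the one-dimensional Sturm–Liouville equation wherever `Y ≠ 0`. -/
theorem page_laplacian_separation
    (ν Λ : ℝ) (hν : ν ∈ Ioo (0 : ℝ) 1) (hΛ : 0 < Λ)
    (n : ℤ) (μ lam : ℝ) (Y : ℝ → ℝ → ℂ) (u : ℝ → ℂ)
    (hYsmooth : ContDiffOn ℝ (⊤ : ℕ∞) (fun p : ℝ × ℝ => Y p.1 p.2) (Ioo (0 : ℝ) π ×ˢ univ))
    (hY : ∀ θ ∈ Ioo (0 : ℝ) π, ∀ φ : ℝ,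
      ((4 / Real.sin θ : ℝ) : ℂ) *
          deriv (fun t => ((Real.sin t : ℝ) : ℂ) * deriv (fun r => Y r φ) t) θ +
        ((4 / (Real.sin θ) ^ 2 : ℝ) : ℂ) * deriv (deriv (fun r => Y θ r)) φ -
        (((n : ℝ) ^ 2 * (Real.cos θ / Real.sin θ) ^ 2 : ℝ) : ℂ) * Y θ φ -
        4 * Complex.I * (n : ℂ) * ((Real.cos θ / (Real.sin θ) ^ 2 : ℝ) : ℂ) *
          deriv (fun r => Y θ r) φ = -(μ : ℂ) * Y θ φ)
    (hu : ∀ x ∈ Ioo (-1 : ℝ) 1, DifferentiableAt ℝ u x)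
    (hu' : ∀ x ∈ Ioo (-1 : ℝ) 1, DifferentiableAt ℝ (deriv u) x) :
    (∀ x ∈ Ioo (-1 : ℝ) 1, ∀ ψ : ℝ, ∀ θ ∈ Ioo (0 : ℝ) π, ∀ φ : ℝ,
        pageLaplacian ν Λ (pagePhi u Y n) x ψ θ φ + (lam : ℂ) * pagePhi u Y n x ψ θ φ =
          (((1 / (pageS ν Λ * pageB ν x) : ℝ) : ℂ) *
              deriv (fun t => ((pageA ν t * pageB ν t : ℝ) : ℂ) * deriv u t) x +
            ((lam - (n : ℝ) ^ 2 / (4 * pageAlpha ν ^ 2 * pageS ν Λ * pageA ν x) -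
                μ / (4 * pageS ν Λ * pageB ν x) : ℝ) : ℂ) * u x) *
            Y θ φ * Complex.exp (Complex.I * (n : ℂ) * (ψ : ℂ))) ∧
    (∀ x ∈ Ioo (-1 : ℝ) 1, ∀ ψ : ℝ, ∀ θ ∈ Ioo (0 : ℝ) π, ∀ φ : ℝ, Y θ φ ≠ 0 →
        (-(pageLaplacian ν Λ (pagePhi u Y n) x ψ θ φ) =
            (lam : ℂ) * pagePhi u Y n x ψ θ φ ↔
          -(((1 / (pageS ν Λ * pageB ν x) : ℝ) : ℂ) *
              deriv (fun t => ((pageA ν t * pageB ν t : ℝ) : ℂ) * deriv u t) x) +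
            (((n : ℝ) ^ 2 / (4 * pageAlpha ν ^ 2 * pageS ν Λ * pageA ν x) +
                μ / (4 * pageS ν Λ * pageB ν x) : ℝ) : ℂ) * u x = (lam : ℂ) * u x)) := by
  have key : ∀ x ψ : ℝ, ∀ θ ∈ Ioo (0 : ℝ) π, ∀ φ : ℝ,
      pageLaplacian ν Λ (pagePhi u Y n) x ψ θ φ + (lam : ℂ) * pagePhi u Y n x ψ θ φ =
        (((1 / (pageS ν Λ * pageB ν x) : ℝ) : ℂ) *
            deriv (fun t => ((pageA ν t * pageB ν t : ℝ) : ℂ) * deriv u t) x +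
          ((lam - (n : ℝ) ^ 2 / (4 * pageAlpha ν ^ 2 * pageS ν Λ * pageA ν x) -
              μ / (4 * pageS ν Λ * pageB ν x) : ℝ) : ℂ) * u x) *
          Y θ φ * Complex.exp (Complex.I * (n : ℂ) * (ψ : ℂ)) := by
    intro x ψ θ hθ φ
    set e : ℂ := Complex.exp (Complex.I * (n : ℂ) * (ψ : ℂ)) with he
    -- x-derivative term
    have hx1 : (fun r => pagePhi u Y n r ψ θ φ)
        = fun r => u r * (Y θ φ * e) := by
      funext r; simp only [pagePhi, he, mul_assoc]
    have hx2 : deriv (fun r => pagePhi u Y n r ψ θ φ)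
        = fun t => deriv u t * (Y θ φ * e) := by
      rw [hx1, deriv_mul_const_field']
    have hx3 : (fun t => ((pageA ν t * pageB ν t : ℝ) : ℂ) *
          deriv (fun r => pagePhi u Y n r ψ θ φ) t)
        = fun t => (((pageA ν t * pageB ν t : ℝ) : ℂ) * deriv u t) * (Y θ φ * e) := by
      funext t; rw [hx2]; ring
    have hT1 : deriv (fun t => ((pageA ν t * pageB ν t : ℝ) : ℂ) *
          deriv (fun r => pagePhi u Y n r ψ θ φ) t) x
        = deriv (fun t => ((pageA ν t * pageB ν t : ℝ) : ℂ) * deriv u t) x * (Y θ φ * e) := by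
      rw [hx3, deriv_mul_const_field]
    -- ψ-derivative term
    have hp1 : (fun r : ℝ => pagePhi u Y n x r θ φ)
        = fun r : ℝ => (u x * Y θ φ) * Complex.exp (Complex.I * (n : ℂ) * (r : ℂ)) := by
      funext r; simp only [pagePhi]
    have hp2 : (fun t : ℝ => deriv (fun r => pagePhi u Y n x r θ φ) t)
        = fun t : ℝ => (u x * Y θ φ) *
            (Complex.I * (n : ℂ) * Complex.exp (Complex.I * (n : ℂ) * (t : ℂ))) := by
      funext t
      rw [hp1, deriv_const_mul_field', expDeriv]
    have hT2 : deriv (fun t => deriv (fun r => pagePhi u Y n x r θ φ) t) ψ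
        = -((n : ℂ)) ^ 2 * (u x * Y θ φ) * e := by
      rw [hp2]
      have h3 : (fun t : ℝ => (u x * Y θ φ) *
            (Complex.I * (n : ℂ) * Complex.exp (Complex.I * (n : ℂ) * (t : ℂ))))
          = fun t : ℝ => ((u x * Y θ φ) * (Complex.I * (n : ℂ))) *
              Complex.exp (Complex.I * (n : ℂ) * (t : ℂ)) := by
        funext t; ring
      rw [h3, ((expHasDeriv n ψ).const_mul _).deriv]
      rw [he]
      linear_combination ((n : ℂ)) ^ 2 * (u x * Y θ φ) *
        Complex.exp (Complex.I * (n : ℂ) * (ψ : ℂ)) * Complex.I_sq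
    -- θ-derivative term
    have ht1 : (fun r => pagePhi u Y n x ψ r φ)
        = fun r => Y r φ * (u x * e) := by
      funext r; simp only [pagePhi, he]; ring
    have ht2 : deriv (fun r => pagePhi u Y n x ψ r φ)
        = fun t => deriv (fun r => Y r φ) t * (u x * e) := by
      rw [ht1, deriv_mul_const_field']
    have ht3 : (fun t => ((Real.sin t : ℝ) : ℂ) *
          deriv (fun r => pagePhi u Y n x ψ r φ) t)
        = fun t => (((Real.sin t : ℝ) : ℂ) * deriv (fun r => Y r φ) t) * (u x * e) := by
      funext t; rw [ht2]; ring
    have hT3 : deriv (fun t => ((Real.sin t : ℝ) : ℂ) *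
          deriv (fun r => pagePhi u Y n x ψ r φ) t) θ
        = deriv (fun t => ((Real.sin t : ℝ) : ℂ) * deriv (fun r => Y r φ) t) θ *
            (u x * e) := by
      rw [ht3, deriv_mul_const_field]
    -- φ-derivative term
    have hf1 : (fun r => pagePhi u Y n x ψ θ r)
        = fun r => Y θ r * (u x * e) := by
      funext r; simp only [pagePhi, he]; ring
    have hf2 : (fun t : ℝ => deriv (fun r => pagePhi u Y n x ψ θ r) t)
        = fun t => deriv (fun r => Y θ r) t * (u x * e) := by
      funext t; rw [hf1, deriv_mul_const_field]
    have hT4 : deriv (fun t => deriv (fun r => pagePhi u Y n x ψ θ r) t) φ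
        = deriv (deriv (fun r => Y θ r)) φ * (u x * e) := by
      rw [hf2, deriv_mul_const_field]
    -- mixed term
    have hm1 : ∀ t : ℝ, deriv (fun r => pagePhi u Y n x t θ r) φ
        = deriv (fun r => Y θ r) φ *
            (u x * Complex.exp (Complex.I * (n : ℂ) * (t : ℂ))) := by
      intro t
      have : (fun r => pagePhi u Y n x t θ r)
          = fun r => Y θ r * (u x * Complex.exp (Complex.I * (n : ℂ) * (t : ℂ))) := by
        funext r; simp only [pagePhi]; ring
      rw [this, deriv_mul_const_field]
    have hm2 : (fun t : ℝ => deriv (fun r => pagePhi u Y n x t θ r) φ)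
        = fun t : ℝ => (deriv (fun r => Y θ r) φ * u x) *
            Complex.exp (Complex.I * (n : ℂ) * (t : ℂ)) := by
      funext t; rw [hm1 t]; ring
    have hT5 : deriv (fun t => deriv (fun r => pagePhi u Y n x t θ r) φ) ψ
        = (deriv (fun r => Y θ r) φ * u x) * (Complex.I * (n : ℂ) * e) := by
      rw [hm2, ((expHasDeriv n ψ).const_mul _).deriv, he]
    have hY' := hY θ hθ φ
    simp only [pageLaplacian]
    rw [hT1, hT2, hT3, hT4, hT5]
    simp only [pagePhi, ← he]
    linear_combination (norm := (push_cast; ring1))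
      ((u x * e) / (4 * ((pageS ν Λ : ℝ) : ℂ) * ((pageB ν x : ℝ) : ℂ))) * hY'
  refine ⟨fun x _ ψ θ hθ φ => key x ψ θ hθ φ, ?_⟩
  intro x hx ψ θ hθ φ hYne
  have h := key x ψ θ hθ φ
  have hEne : Complex.exp (Complex.I * (n : ℂ) * (ψ : ℂ)) ≠ 0 := Complex.exp_ne_zero _
  constructor
  · intro h2
    have h0 : (((1 / (pageS ν Λ * pageB ν x) : ℝ) : ℂ) *
          deriv (fun t => ((pageA ν t * pageB ν t : ℝ) : ℂ) * deriv u t) x +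
        ((lam - (n : ℝ) ^ 2 / (4 * pageAlpha ν ^ 2 * pageS ν Λ * pageA ν x) -
            μ / (4 * pageS ν Λ * pageB ν x) : ℝ) : ℂ) * u x) *
        Y θ φ * Complex.exp (Complex.I * (n : ℂ) * (ψ : ℂ)) = 0 := by
      linear_combination -h - h2
    have hexpr : ((1 / (pageS ν Λ * pageB ν x) : ℝ) : ℂ) *
          deriv (fun t => ((pageA ν t * pageB ν t : ℝ) : ℂ) * deriv u t) x +
        ((lam - (n : ℝ) ^ 2 / (4 * pageAlpha ν ^ 2 * pageS ν Λ * pageA ν x) -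
            μ / (4 * pageS ν Λ * pageB ν x) : ℝ) : ℂ) * u x = 0 := by
      rcases mul_eq_zero.mp h0 with h' | h'
      · rcases mul_eq_zero.mp h' with h'' | h''
        · exact h''
        · exact absurd h'' hYne
      · exact absurd h' hEne
    linear_combination (norm := (push_cast; ring1)) -hexpr
  · intro h2
    have h2' : ((1 / (pageS ν Λ * pageB ν x) : ℝ) : ℂ) *
          deriv (fun t => ((pageA ν t * pageB ν t : ℝ) : ℂ) * deriv u t) x +
        ((lam - (n : ℝ) ^ 2 / (4 * pageAlpha ν ^ 2 * pageS ν Λ * pageA ν x) -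
            μ / (4 * pageS ν Λ * pageB ν x) : ℝ) : ℂ) * u x = 0 := by
      linear_combination (norm := (push_cast; ring1)) -h2
    linear_combination -(Y θ φ * Complex.exp (Complex.I * (n : ℂ) * (ψ : ℂ))) * h2' - h
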